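/- (Power-field case of Theorem 3) If the constants satisfy Σ_{t=1}^T (4P₀γ_t²/N₀)·max_i min_k |h_{k,t}(i)|²/(D²ζ²_{k,t}(i)) < R, then the choice η_t(i) = P₀·min_k |h_{k,t}(i)|²/(D²ζ²_{k,t}(i)), σ_{k,t}(i) = 0, ξ_t = N₀ is feasible for problem P₁ and minimizes the objective Σ_t (1−μ/L)^{−t}(Σ_{k,i} σ²_{k,t}(i) + Σ_i N₀/η_t(i)), since the objective is decreasing in each η_t(i) and each η_t(i) attains its maximum feasible value under the power constraints. -/

import Mathlib

/-- Feasibility for problem P₁: `η t i` transmit power scalars, `σ t k i`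
artificial-noise standard deviations, `ξ t` effective-noise power lower bound. -/
def FeasibleP1 {T K I : ℕ} (hI : 0 < I) (N₀ D P₀ e' R : ℝ)
    (ζ hsq : Fin T → Fin K → Fin I → ℝ) (γ : Fin T → ℝ)
    (η : Fin T → Fin I → ℝ) (σ : Fin T → Fin K → Fin I → ℝ)
    (ξ : Fin T → ℝ) : Prop :=
  (∀ t i, 0 < η t i) ∧ (∀ t k i, 0 ≤ σ t k i) ∧ (∀ t, 0 < ξ t) ∧
  (∑ t, (4 * γ t ^ 2 / ξ t) *
      Finset.univ.sup' ⟨⟨0, hI⟩, Finset.mem_univ _⟩ (η t) ≤ R) ∧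
  (∀ t i, ξ t ≤ η t i * ∑ k, σ t k i ^ 2 + N₀) ∧
  (∀ t k i, η t i * (D ^ 2 * ζ t k i ^ 2 + e' * σ t k i ^ 2) ≤ P₀ * hsq t k i)

/-- Objective of problem P₁. -/
noncomputable def ObjP1 {T K I : ℕ} (μ L N₀ : ℝ)
    (η : Fin T → Fin I → ℝ) (σ : Fin T → Fin K → Fin I → ℝ) : ℝ :=
  ∑ t, ((1 - μ / L)⁻¹) ^ (t.val + 1) *
    (∑ k, ∑ i, σ t k i ^ 2 + ∑ i, N₀ / η t i)

/-!
The power constraint `η (D²ζ² + e'σ²) ≤ P₀ |h|²` caps every feasible `η t i` by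
`P₀ min_k |h_k|² / (D²ζ²_k)`, and at `σ = 0` that cap is attained. The objective only grows
with `σ` and decreases in each `η t i`, so the capped powers with zero artificial noise are
optimal; the hypothesis on `R` is exactly the budget constraint at `ξ = N₀`.
-/

open Finset

theorem le_mul_inf'_div_iff {ι : Type*} {s : Finset ι} (hs : s.Nonempty) {P x : ℝ}
    {h c : ι → ℝ} (hP : 0 < P) (hc : ∀ k ∈ s, 0 < c k) :
    x ≤ P * s.inf' hs (fun k => h k / c k) ↔ ∀ k ∈ s, x * c k ≤ P * h k := by
  rw [← div_le_iff₀' hP, le_inf'_iff]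
  refine forall₂_congr fun k hk => ?_
  rw [div_le_div_iff₀ hP (hc k hk), mul_comm (h k)]

theorem inv_one_sub_div_nonneg {μ L : ℝ} (hμ : 0 ≤ μ) (hμL : μ ≤ L) : 0 ≤ (1 - μ / L)⁻¹ :=
  inv_nonneg.mpr (sub_nonneg.mpr (div_le_one_of_le₀ hμL (hμ.trans hμL)))

section Objective

variable {T K I : ℕ} {μ L N₀ : ℝ}

theorem ObjP1_zero_noise_le (hcoef : 0 ≤ (1 - μ / L)⁻¹) (η : Fin T → Fin I → ℝ)
    (σ : Fin T → Fin K → Fin I → ℝ) :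
    ObjP1 μ L N₀ η (fun (_ : Fin T) (_ : Fin K) (_ : Fin I) => (0 : ℝ)) ≤ ObjP1 μ L N₀ η σ := by
  refine sum_le_sum fun t _ => mul_le_mul_of_nonneg_left ?_ (pow_nonneg hcoef _)
  simp only [zero_pow two_ne_zero, sum_const_zero, zero_add]
  exact le_add_of_nonneg_left (by positivity)

theorem ObjP1_antitone (hcoef : 0 ≤ (1 - μ / L)⁻¹) (hN₀ : 0 ≤ N₀) {η η' : Fin T → Fin I → ℝ}
    (hη : ∀ t i, 0 < η t i) (hle : ∀ t i, η t i ≤ η' t i) (σ : Fin T → Fin K → Fin I → ℝ) :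
    ObjP1 μ L N₀ η' σ ≤ ObjP1 μ L N₀ η σ := by
  unfold ObjP1
  gcongr with t _ i
  · exact hη t i
  · exact hle t i

end Objective

section Feasibility

variable {T K I : ℕ} {hI : 0 < I} {N₀ D P₀ e' R : ℝ} {ζ hsq : Fin T → Fin K → Fin I → ℝ}
  {γ : Fin T → ℝ}

theorem FeasibleP1.le_mul_inf' {η : Fin T → Fin I → ℝ} {σ : Fin T → Fin K → Fin I → ℝ}
    {ξ : Fin T → ℝ} (hf : FeasibleP1 hI N₀ D P₀ e' R ζ hsq γ η σ ξ)
    (hK : (univ : Finset (Fin K)).Nonempty) (hP₀ : 0 < P₀) (he' : 0 ≤ e')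
    (hc : ∀ t k i, 0 < D ^ 2 * ζ t k i ^ 2) (t : Fin T) (i : Fin I) :
    η t i ≤ P₀ * univ.inf' hK (fun k => hsq t k i / (D ^ 2 * ζ t k i ^ 2)) := by
  obtain ⟨hη, -, -, -, -, hpow⟩ := hf
  refine (le_mul_inf'_div_iff hK hP₀ fun k _ => hc t k i).mpr fun k _ => ?_
  have : 0 ≤ η t i * (e' * σ t k i ^ 2) := mul_nonneg (hη t i).le (by positivity)
  linarith [hpow t k i]

theorem feasibleP1_of_eq_mul_inf' (hK : (univ : Finset (Fin K)).Nonempty) (hN₀ : 0 < N₀)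
    (hP₀ : 0 < P₀) (hc : ∀ t k i, 0 < D ^ 2 * ζ t k i ^ 2) (hhsq : ∀ t k i, 0 < hsq t k i)
    {η : Fin T → Fin I → ℝ}
    (hη : ∀ t i, η t i = P₀ * univ.inf' hK (fun k => hsq t k i / (D ^ 2 * ζ t k i ^ 2)))
    (hbudget : ∑ t, (4 * P₀ * γ t ^ 2 / N₀) * univ.sup' ⟨⟨0, hI⟩, mem_univ _⟩
      (fun i => univ.inf' hK (fun k => hsq t k i / (D ^ 2 * ζ t k i ^ 2))) ≤ R) :
    FeasibleP1 hI N₀ D P₀ e' R ζ hsq γ η (fun _ _ _ => 0) (fun _ => N₀) := by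
  refine ⟨fun t i => ?_, fun _ _ _ => le_rfl, fun _ => hN₀, ?_, fun t i => by simp, ?_⟩
  · rw [hη]
    exact mul_pos hP₀ ((lt_inf'_iff _).mpr fun k _ => div_pos (hhsq t k i) (hc t k i))
  · refine le_of_eq_of_le (sum_congr rfl fun t _ => ?_) hbudget
    have hsup : univ.sup' ⟨⟨0, hI⟩, mem_univ _⟩ (η t) = P₀ * univ.sup' ⟨⟨0, hI⟩, mem_univ _⟩
        (fun i => univ.inf' hK (fun k => hsq t k i / (D ^ 2 * ζ t k i ^ 2))) := by
      simp only [funext (hη t)]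
      exact (map_finset_sup' (OrderIso.mulLeft₀ P₀ hP₀) _ _).symm
    rw [hsup]
    ring
  · intro t k i
    have := (le_mul_inf'_div_iff hK hP₀ fun k _ => hc t k i).mp (hη t i).le k (mem_univ k)
    simpa using this

end Feasibility

theorem stmt17_general {T K I : ℕ} (hK : 0 < K) (hI : 0 < I)
    (μ L N₀ D P₀ e' R : ℝ)
    (hμ : 0 < μ) (hμL : μ ≤ L) (hN₀ : 0 < N₀) (hD : 0 < D) (hP₀ : 0 < P₀)
    (he' : 0 < e')
    (ζ hsq : Fin T → Fin K → Fin I → ℝ)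
    (hζ : ∀ t k i, 0 < ζ t k i) (hhsq : ∀ t k i, 0 < hsq t k i)
    (γ : Fin T → ℝ)
    (ηstar : Fin T → Fin I → ℝ)
    (hηstar : ∀ t i, ηstar t i = P₀ *
      Finset.univ.inf' ⟨⟨0, hK⟩, Finset.mem_univ _⟩
        (fun k => hsq t k i / (D ^ 2 * ζ t k i ^ 2)))
    (hcond : ∑ t, (4 * P₀ * γ t ^ 2 / N₀) *
        Finset.univ.sup' ⟨⟨0, hI⟩, Finset.mem_univ _⟩
          (fun i => Finset.univ.inf' ⟨⟨0, hK⟩, Finset.mem_univ _⟩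
            (fun k => hsq t k i / (D ^ 2 * ζ t k i ^ 2))) < R) :
    FeasibleP1 hI N₀ D P₀ e' R ζ hsq γ ηstar
        (fun _ _ _ => (0 : ℝ)) (fun _ => N₀) ∧
      ∀ (η : Fin T → Fin I → ℝ) (σ : Fin T → Fin K → Fin I → ℝ)
        (ξ : Fin T → ℝ), FeasibleP1 hI N₀ D P₀ e' R ζ hsq γ η σ ξ →
          ObjP1 μ L N₀ ηstar (fun (_ : Fin T) (_ : Fin K) (_ : Fin I) => (0 : ℝ))
            ≤ ObjP1 μ L N₀ η σ := by
  have hc : ∀ t k i, 0 < D ^ 2 * ζ t k i ^ 2 := fun t k i => by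
    have := hζ t k i
    positivity
  have hcoef := inv_one_sub_div_nonneg hμ.le hμL
  refine ⟨feasibleP1_of_eq_mul_inf' _ hN₀ hP₀ hc hhsq hηstar hcond.le, fun η σ ξ hf => ?_⟩
  have hle : ∀ t i, η t i ≤ ηstar t i := fun t i => by
    rw [hηstar]
    exact hf.le_mul_inf' _ hP₀ he'.le hc t i
  calc ObjP1 μ L N₀ ηstar (fun (_ : Fin T) (_ : Fin K) (_ : Fin I) => (0 : ℝ))
      ≤ ObjP1 μ L N₀ η (fun (_ : Fin T) (_ : Fin K) (_ : Fin I) => (0 : ℝ)) :=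
        ObjP1_antitone hcoef hN₀.le hf.1 hle _
    _ ≤ ObjP1 μ L N₀ η σ := ObjP1_zero_noise_le hcoef η σ

theorem stmt17 {T K I : ℕ} (hK : 0 < K) (hI : 0 < I)
    (μ L N₀ D P₀ e' R : ℝ)
    (hμ : 0 < μ) (hμL : μ ≤ L) (hN₀ : 0 < N₀) (hD : 0 < D) (hP₀ : 0 < P₀)
    (he' : 0 < e') (hR : 0 < R)
    (ζ hsq : Fin T → Fin K → Fin I → ℝ)
    (hζ : ∀ t k i, 0 < ζ t k i) (hhsq : ∀ t k i, 0 < hsq t k i)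
    (γ : Fin T → ℝ) (hγ : ∀ t, 0 < γ t)
    (ηstar : Fin T → Fin I → ℝ)
    (hηstar : ∀ t i, ηstar t i = P₀ *
      Finset.univ.inf' ⟨⟨0, hK⟩, Finset.mem_univ _⟩
        (fun k => hsq t k i / (D ^ 2 * ζ t k i ^ 2)))
    (hcond : ∑ t, (4 * P₀ * γ t ^ 2 / N₀) *
        Finset.univ.sup' ⟨⟨0, hI⟩, Finset.mem_univ _⟩
          (fun i => Finset.univ.inf' ⟨⟨0, hK⟩, Finset.mem_univ _⟩
            (fun k => hsq t k i / (D ^ 2 * ζ t k i ^ 2))) < R) :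
    FeasibleP1 hI N₀ D P₀ e' R ζ hsq γ ηstar
        (fun _ _ _ => (0 : ℝ)) (fun _ => N₀) ∧
      ∀ (η : Fin T → Fin I → ℝ) (σ : Fin T → Fin K → Fin I → ℝ)
        (ξ : Fin T → ℝ), FeasibleP1 hI N₀ D P₀ e' R ζ hsq γ η σ ξ →
          ObjP1 μ L N₀ ηstar (fun (_ : Fin T) (_ : Fin K) (_ : Fin I) => (0 : ℝ))
            ≤ ObjP1 μ L N₀ η σ :=
  stmt17_general hK hI μ L N₀ D P₀ e' R hμ hμL hN₀ hD hP₀ he' ζ hsq hζ hhsq γ ηstar hηstar hcond
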